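/- arXiv:0809.0827 — 3 statements merged into one kernel-verified Lean document; each statement's English description precedes it below -/
import Mathlib

section
/- Let D be a real diagonal n×n matrix and A a Hermitian n×n matrix such that D - A is row diagonally dominant. Then there exist real numbers λ_i, μ_i and vectors v_i such that D = Σ_i μ_i v_i v_i^T, A = Σ_i λ_i v_i v_i^T, and μ_i ≥ λ_i for all i. -/
/-!
A pair of off-diagonal entries a = A i j, ā = A j i costs two rank-one terms: if ω is the phase
of a, the vectors eᵢ ± ω̄ eⱼ with weights ±‖a‖/2 in A and ‖a‖/2 in D give a Eᵢⱼ + ā Eⱼᵢ in A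
and ‖a‖ (Eᵢᵢ + Eⱼⱼ) in D. Taking this for every entry of half the off-diagonal part of A uses up
∑_{j ≠ i} ‖A i j‖ of D i i; diagonal dominance says the remainder still dominates Re (A i i), so
the diagonal of A is covered by the standard basis vectors.
-/

open Matrix Finset

/-- A complex matrix is row diagonally dominant: each diagonal entry is real and
dominates the sum of absolute values of the off-diagonal entries in its row. -/
def RowDiagDom {n : ℕ} (M : Matrix (Fin n) (Fin n) ℂ) : Prop :=
  ∀ i, (M i i).im = 0 ∧ ∑ j ∈ Finset.univ.erase i, ‖M i j‖ ≤ (M i i).re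

open ComplexConjugate

theorem Matrix.vecMulVec_single_star_single {ι α : Type*} [DecidableEq ι] [Semiring α]
    [StarRing α] (i j : ι) :
    vecMulVec (Pi.single i (1 : α)) (star (Pi.single j 1)) = single i j 1 := by
  rw [← Pi.single_star, star_one, single_eq_single_vecMulVec_single]

section JointDecomposition

variable {ι : Type*}

def HasJointRankOneDecomp (D A : Matrix ι ι ℂ) : Prop :=
  ∃ (k : ℕ) (μ lam : Fin k → ℝ) (v : Fin k → ι → ℂ),
    D = ∑ i, (μ i : ℂ) • vecMulVec (v i) (star (v i)) ∧
    A = ∑ i, (lam i : ℂ) • vecMulVec (v i) (star (v i)) ∧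
    ∀ i, lam i ≤ μ i

namespace HasJointRankOneDecomp

theorem zero : HasJointRankOneDecomp (0 : Matrix ι ι ℂ) 0 :=
  ⟨0, Fin.elim0, Fin.elim0, Fin.elim0, by simp, by simp, fun i => i.elim0⟩

theorem rankOne (v : ι → ℂ) {μ lam : ℝ} (h : lam ≤ μ) :
    HasJointRankOneDecomp ((μ : ℂ) • vecMulVec v (star v)) ((lam : ℂ) • vecMulVec v (star v)) :=
  ⟨1, fun _ => μ, fun _ => lam, fun _ => v, by simp, by simp, fun _ => h⟩

theorem add {D₁ A₁ D₂ A₂ : Matrix ι ι ℂ} (h₁ : HasJointRankOneDecomp D₁ A₁)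
    (h₂ : HasJointRankOneDecomp D₂ A₂) : HasJointRankOneDecomp (D₁ + D₂) (A₁ + A₂) := by
  obtain ⟨k₁, μ₁, lam₁, v₁, rfl, rfl, hle₁⟩ := h₁
  obtain ⟨k₂, μ₂, lam₂, v₂, rfl, rfl, hle₂⟩ := h₂
  refine ⟨k₁ + k₂, Fin.append μ₁ μ₂, Fin.append lam₁ lam₂, Fin.append v₁ v₂,
    by simp [Fin.sum_univ_add], by simp [Fin.sum_univ_add], Fin.addCases ?_ ?_⟩ <;>
    simp [hle₁, hle₂]

theorem sum [Fintype ι] {κ : Type*} (s : Finset κ) {D A : κ → Matrix ι ι ℂ}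
    (h : ∀ i ∈ s, HasJointRankOneDecomp (D i) (A i)) :
    HasJointRankOneDecomp (∑ i ∈ s, D i) (∑ i ∈ s, A i) := by
  classical
  induction s using Finset.induction_on with
  | empty => simpa using zero
  | insert a s ha ih =>
    rw [sum_insert ha, sum_insert ha]
    exact (h a (mem_insert_self a s)).add (ih fun i hi => h i (mem_insert_of_mem hi))

theorem pair (x y : ι → ℂ) (a : ℂ) :
    HasJointRankOneDecomp ((‖a‖ : ℂ) • (vecMulVec x (star x) + vecMulVec y (star y)))
      (a • vecMulVec x (star y) + conj a • vecMulVec y (star x)) := by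
  set ω := Complex.exp (a.arg * Complex.I)
  have hω : ω * conj ω = 1 := by
    rw [Complex.mul_conj, Complex.normSq_eq_norm_sq, Complex.norm_exp_ofReal_mul_I]; simp
  have ha : (‖a‖ : ℂ) * ω = a := Complex.norm_mul_exp_arg_mul_I a
  have ha' : (‖a‖ : ℂ) * conj ω = conj a := by simpa using congr_arg conj ha
  have hsum := (rankOne (x + conj ω • y) (le_refl (‖a‖ / 2))).add
    (rankOne (x - conj ω • y) (neg_le_self (by positivity : 0 ≤ ‖a‖ / 2)))
  convert hsum using 1 <;> ext p q <;>
    simp only [Matrix.add_apply, Matrix.smul_apply, Matrix.neg_apply, vecMulVec_apply,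
      Pi.add_apply, Pi.sub_apply, Pi.smul_apply, Pi.star_apply, RCLike.star_def, smul_eq_mul,
      star_add, star_sub, star_smul, RingHomCompTriple.comp_apply, RingHom.id_apply, neg_smul,
      Complex.ofReal_div, Complex.ofReal_ofNat, Complex.ofReal_neg]
  · linear_combination (-‖a‖ * y p * conj (y q) : ℂ) * hω
  · linear_combination (-x p * conj (y q)) * ha - (y p * conj (x q)) * ha'

theorem diagonal [Fintype ι] [DecidableEq ι] {d l : ι → ℝ} (h : ∀ i, l i ≤ d i) :
    HasJointRankOneDecomp (diagonal fun i => (d i : ℂ)) (diagonal fun i => (l i : ℂ)) := by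
  have key (c : ι → ℂ) :
      Matrix.diagonal c = ∑ i, c i • vecMulVec (Pi.single i 1) (star (Pi.single i 1)) := by
    simp_rw [vecMulVec_single_star_single, smul_single, smul_eq_mul, mul_one,
      sum_single_eq_diagonal]
  rw [key, key]
  exact sum _ fun i _ => rankOne _ (h i)

theorem add_conjTranspose [Fintype ι] [DecidableEq ι] (M : Matrix ι ι ℂ) :
    HasJointRankOneDecomp (Matrix.diagonal fun i => ((∑ j, ‖M i j‖ + ∑ j, ‖M j i‖ : ℝ) : ℂ))
      (M + Mᴴ) := by
  have h := sum univ fun i _ => sum univ fun j _ =>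
    pair (Pi.single i (1 : ℂ)) (Pi.single j 1) (M i j)
  simp only [vecMulVec_single_star_single] at h
  convert h using 1 <;> ext p q
  · rcases eq_or_ne p q with rfl | hpq
    · simp [Matrix.sum_apply, single_apply, sum_add_distrib]
    · simp [Matrix.sum_apply, single_apply, sum_add_distrib, ite_and, hpq]
  · simp [Matrix.sum_apply, single_apply, sum_add_distrib, ite_and]

theorem offDiag_of_isHermitian [Fintype ι] [DecidableEq ι] {A : Matrix ι ι ℂ}
    (hA : A.IsHermitian) :
    HasJointRankOneDecomp (Matrix.diagonal fun i => ((∑ j ∈ univ.erase i, ‖A i j‖ : ℝ) : ℂ))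
      (A - Matrix.diagonal fun i => ((A i i).re : ℂ)) := by
  convert add_conjTranspose (of fun i j => if i = j then 0 else A i j / 2) using 1
  · congr 2 with i
    have hsymm (j : ι) : ‖A j i‖ = ‖A i j‖ := by rw [← hA.apply i j, norm_star]
    rw [← filter_ne' univ i, sum_filter, ← sum_add_distrib]
    refine congrArg _ (sum_congr rfl fun j _ => ?_)
    rcases eq_or_ne j i with rfl | hji
    · simp
    · simp [hji, hji.symm, hsymm]
  · ext p q
    rcases eq_or_ne p q with rfl | hpq
    · simpa [sub_eq_zero] using (hA.coe_re_apply_self p).symm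
    · have hconj : conj (A q p) = A p q := hA.apply p q
      simp [hpq, hpq.symm, hconj]

end HasJointRankOneDecomp

end JointDecomposition

theorem RowDiagDom.re_le_sub_sum_norm {n : ℕ} {D : Matrix (Fin n) (Fin n) ℝ} (hD : D.IsDiag)
    {A : Matrix (Fin n) (Fin n) ℂ} (h : RowDiagDom (D.map Complex.ofReal - A)) (i : Fin n) :
    (A i i).re ≤ D i i - ∑ j ∈ univ.erase i, ‖A i j‖ := by
  have hoff : ∑ j ∈ univ.erase i, ‖(D.map Complex.ofReal - A) i j‖ = ∑ j ∈ univ.erase i, ‖A i j‖ :=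
    sum_congr rfl fun j hj => by simp [hD (ne_of_mem_erase hj).symm]
  have hi := (h i).2
  rw [hoff] at hi
  simp only [Matrix.sub_apply, map_apply, Complex.sub_re, Complex.ofReal_re] at hi
  linarith

/-- If D is real diagonal and A Hermitian with D - A row diagonally
dominant, then D and A admit a joint decomposition D = Σ μᵢ vᵢvᵢᴴ, A = Σ λᵢ vᵢvᵢᴴ
with μᵢ ≥ λᵢ. -/
theorem stmt_2 {n : ℕ} (D : Matrix (Fin n) (Fin n) ℝ) (hD : D.IsDiag)
    (A : Matrix (Fin n) (Fin n) ℂ) (hA : A.IsHermitian)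
    (hdd : RowDiagDom (D.map Complex.ofReal - A)) :
    ∃ (k : ℕ) (μ lam : Fin k → ℝ) (v : Fin k → (Fin n → ℂ)),
      D.map Complex.ofReal = ∑ i, (μ i : ℂ) • Matrix.vecMulVec (v i) (star (v i)) ∧
      A = ∑ i, (lam i : ℂ) • Matrix.vecMulVec (v i) (star (v i)) ∧
      ∀ i, lam i ≤ μ i := by
  have h := (HasJointRankOneDecomp.diagonal (hdd.re_le_sub_sum_norm hD)).add
    (HasJointRankOneDecomp.offDiag_of_isHermitian hA)
  have hDdiag : D.map Complex.ofReal = diagonal fun i => (D i i : ℂ) := by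
    conv_lhs => rw [← hD.diagonal_diag, diagonal_map Complex.ofReal_zero]
    rfl
  simp only [diagonal_add, Complex.ofReal_sub, sub_add_cancel, add_sub_cancel] at h
  rwa [hDdiag]
end

section
/- Let G be a graph on vertex set V×W and G^{pT} its partial transpose graph. If the normalized Laplacian matrix of G is separable in C^{|V|} × C^{|W|}, then every vertex has the same degree in G as in G^{pT}. -/
open Matrix Finset
open scoped Kronecker Classical ComplexOrder

/-- The partial transpose graph: {(u,v),(w,y)} is an edge iff {(u,y),(w,v)} is an
edge of the original graph. -/
def partialTranspose {α β : Type*} (G : SimpleGraph (α × β)) : SimpleGraph (α × β) where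
  Adj x y := G.Adj (x.1, y.2) (y.1, x.2)
  symm := ⟨fun x y h => G.adj_symm h⟩
  loopless := ⟨fun x h => G.loopless.irrefl (x.1, x.2) h⟩

/-- The degree of a vertex: the number of neighbors. -/
noncomputable def natDeg {γ : Type*} [Fintype γ] (G : SimpleGraph γ) (x : γ) : ℕ :=
  (Finset.univ.filter fun y => G.Adj x y).card

/-- The 0-1 adjacency matrix of a graph, over ℂ. -/
noncomputable def adjMatC {γ : Type*} [Fintype γ] (G : SimpleGraph γ) : Matrix γ γ ℂ :=
  Matrix.of fun u v => if G.Adj u v then 1 else 0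

/-- The Laplacian matrix D - A of a graph. -/
noncomputable def lapMat {γ : Type*} [Fintype γ] [DecidableEq γ] (G : SimpleGraph γ) :
    Matrix γ γ ℂ :=
  Matrix.diagonal (fun x => ∑ y, adjMatC G x y) - adjMatC G

/-- A density matrix: Hermitian positive semidefinite with unit trace. -/
def IsDensityMatrix {γ : Type*} [Fintype γ] [DecidableEq γ] (M : Matrix γ γ ℂ) : Prop :=
  M.PosSemidef ∧ M.trace = 1

/-- Bipartite separability of a matrix on ℂ^{|α|} ⊗ ℂ^{|β|}. -/
def SepDensity2 {α β : Type*} [Fintype α] [Fintype β] [DecidableEq α] [DecidableEq β]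
    (A : Matrix (α × β) (α × β) ℂ) : Prop :=
  ∃ (k : ℕ) (c : Fin k → ℝ) (ρ : Fin k → Matrix α α ℂ) (σ : Fin k → Matrix β β ℂ),
    (∀ t, 0 ≤ c t) ∧ (∑ t, c t = 1) ∧
    (∀ t, IsDensityMatrix (ρ t) ∧ IsDensityMatrix (σ t)) ∧
    A = ∑ t, (c t : ℂ) • (ρ t ⊗ₖ σ t)

/-!
Partial transposition `M ↦ Mᵀᴬ` maps `ρ ⊗ σ` to `ρᵀ ⊗ σ`, so it keeps separable states positive
semidefinite, and it permutes the entries of a matrix. The Laplacian annihilates the all-ones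
vector `𝟙`, hence `𝟙ᴴ Lᵀᴬ 𝟙 = 𝟙ᴴ L 𝟙 = 0`, and positivity forces `Lᵀᴬ 𝟙 = 0`. Finally
`Lᵀᴬ = D_G - A_{G^{pT}}`, whose row sums are `deg_G - deg_{G^{pT}}`.
-/

namespace Matrix

variable {α β R : Type*}

def partialTransposeFst (M : Matrix (α × β) (α × β) R) : Matrix (α × β) (α × β) R :=
  of fun p q => M (q.1, p.2) (p.1, q.2)

@[simp]
lemma partialTransposeFst_apply (M : Matrix (α × β) (α × β) R) (p q : α × β) :
    M.partialTransposeFst p q = M (q.1, p.2) (p.1, q.2) := rfl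

lemma partialTransposeFst_sub [Sub R] (M N : Matrix (α × β) (α × β) R) :
    (M - N).partialTransposeFst = M.partialTransposeFst - N.partialTransposeFst := rfl

lemma partialTransposeFst_smul {S : Type*} [SMul S R] (c : S) (M : Matrix (α × β) (α × β) R) :
    (c • M).partialTransposeFst = c • M.partialTransposeFst := rfl

lemma partialTransposeFst_sum [AddCommMonoid R] {ι : Type*} (s : Finset ι)
    (M : ι → Matrix (α × β) (α × β) R) :
    (∑ i ∈ s, M i).partialTransposeFst = ∑ i ∈ s, (M i).partialTransposeFst := by
  ext p q
  simp [sum_apply]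

lemma partialTransposeFst_kronecker [Mul R] (A : Matrix α α R) (B : Matrix β β R) :
    (A ⊗ₖ B).partialTransposeFst = Aᵀ ⊗ₖ B := rfl

lemma partialTransposeFst_diagonal [Zero R] [DecidableEq α] [DecidableEq β] (d : α × β → R) :
    (diagonal d).partialTransposeFst = diagonal d := by
  ext ⟨a, b⟩ ⟨c, e⟩
  by_cases h : a = c ∧ b = e
  · obtain ⟨rfl, rfl⟩ := h
    simp
  · rw [partialTransposeFst_apply, diagonal_apply_ne, diagonal_apply_ne] <;> grind

lemma sum_partialTransposeFst_apply [Fintype α] [Fintype β] [AddCommMonoid R]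
    (M : Matrix (α × β) (α × β) R) :
    ∑ p, ∑ q, M.partialTransposeFst p q = ∑ p, ∑ q, M p q := by
  simp only [partialTransposeFst_apply, Fintype.sum_prod_type]
  rw [Finset.sum_comm]
  exact (Finset.sum_congr rfl fun _ _ => Finset.sum_comm).trans Finset.sum_comm

lemma PosSemidef.partialTransposeFst_mulVec_one_eq_zero {𝕜 : Type*} [RCLike 𝕜] [Fintype α]
    [Fintype β] {M : Matrix (α × β) (α × β) 𝕜} (hM : M.partialTransposeFst.PosSemidef)
    (h : M *ᵥ 1 = 0) : M.partialTransposeFst *ᵥ 1 = 0 := by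
  refine (hM.dotProduct_mulVec_zero_iff 1).mp ?_
  have hsum : ∑ p, ∑ q, M p q = 0 := by
    simpa [mulVec, dotProduct] using congrArg (fun v => ∑ p, v p) h
  simp only [star_one, mulVec, dotProduct, Pi.one_apply, one_mul, mul_one]
  rw [sum_partialTransposeFst_apply, hsum]

lemma diagonal_sub_mulVec_one {γ : Type*} [Fintype γ] [DecidableEq γ] [NonAssocRing R]
    (d : γ → R) (A : Matrix γ γ R) : (diagonal d - A) *ᵥ 1 = d - A *ᵥ 1 := by
  ext p
  rw [sub_mulVec, Pi.sub_apply, Pi.sub_apply, mulVec_diagonal, Pi.one_apply, mul_one]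

end Matrix

section Separable

variable {α β : Type*} [Fintype α] [Fintype β] [DecidableEq α] [DecidableEq β]

lemma IsDensityMatrix.kronecker {A : Matrix α α ℂ} {B : Matrix β β ℂ} (hA : IsDensityMatrix A)
    (hB : IsDensityMatrix B) : IsDensityMatrix (A ⊗ₖ B) :=
  ⟨hA.1.kronecker hB.1, by rw [trace_kronecker, hA.2, hB.2, mul_one]⟩

lemma SepDensity2.trace_eq_one {A : Matrix (α × β) (α × β) ℂ} (hA : SepDensity2 A) :
    A.trace = 1 := by
  obtain ⟨k, c, ρ, σ, -, hc, hρσ, rfl⟩ := hA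
  simp only [trace_sum, trace_smul, ((hρσ _).1.kronecker (hρσ _).2).2, smul_eq_mul, mul_one]
  exact_mod_cast hc

/-- The Peres–Horodecki (PPT) criterion. -/
lemma SepDensity2.posSemidef_partialTransposeFst {A : Matrix (α × β) (α × β) ℂ}
    (hA : SepDensity2 A) : A.partialTransposeFst.PosSemidef := by
  obtain ⟨k, c, ρ, σ, hc, -, hρσ, rfl⟩ := hA
  simp only [partialTransposeFst_sum, partialTransposeFst_smul, partialTransposeFst_kronecker]
  exact posSemidef_sum _ fun t _ =>
    ((hρσ t).1.1.transpose.kronecker (hρσ t).2.1).smul (Complex.zero_le_real.mpr (hc t))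

end Separable

section Graph

variable {γ : Type*} [Fintype γ]

lemma sum_adjMatC_apply (G : SimpleGraph γ) (p : γ) : ∑ q, adjMatC G p q = natDeg G p := by
  simp [adjMatC, natDeg, Finset.sum_boole]

lemma adjMatC_mulVec_one (G : SimpleGraph γ) : adjMatC G *ᵥ 1 = fun p => (natDeg G p : ℂ) := by
  ext p
  simp [mulVec, dotProduct, sum_adjMatC_apply]

lemma lapMat_eq [DecidableEq γ] (G : SimpleGraph γ) :
    lapMat G = diagonal (fun p => (natDeg G p : ℂ)) - adjMatC G := by
  simp only [lapMat, sum_adjMatC_apply]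

lemma lapMat_mulVec_one [DecidableEq γ] (G : SimpleGraph γ) : lapMat G *ᵥ 1 = 0 := by
  rw [lapMat_eq, diagonal_sub_mulVec_one, adjMatC_mulVec_one, sub_self]

end Graph

section PartialTranspose

variable {α β : Type*} [Fintype α] [Fintype β]

lemma partialTransposeFst_adjMatC (G : SimpleGraph (α × β)) :
    (adjMatC G).partialTransposeFst = adjMatC (partialTranspose G) := by
  ext p q
  simp only [partialTransposeFst_apply, adjMatC, of_apply, partialTranspose, G.adj_comm]
  congr

lemma partialTransposeFst_lapMat_mulVec_one [DecidableEq α] [DecidableEq β]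
    (G : SimpleGraph (α × β)) :
    (lapMat G).partialTransposeFst *ᵥ 1 =
      fun p => (natDeg G p : ℂ) - natDeg (partialTranspose G) p := by
  rw [lapMat_eq, partialTransposeFst_sub, partialTransposeFst_diagonal,
    partialTransposeFst_adjMatC, diagonal_sub_mulVec_one, adjMatC_mulVec_one]
  rfl

end PartialTranspose

/-- if the normalized Laplacian matrix of a graph G on V × W is
separable in ℂ^{|V|} × ℂ^{|W|}, then every vertex has the same degree in G as in
the partial transpose graph. -/
theorem stmt_12 {α β : Type*} [Fintype α] [Fintype β] [DecidableEq α] [DecidableEq β]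
    (G : SimpleGraph (α × β))
    (hsep : SepDensity2 ((lapMat G).trace⁻¹ • lapMat G)) :
    ∀ x, natDeg (partialTranspose G) x = natDeg G x := by
  intro x
  have htrace : (lapMat G).trace ≠ 0 := fun h => by
    simpa [h] using hsep.trace_eq_one
  have hzero := hsep.posSemidef_partialTransposeFst.partialTransposeFst_mulVec_one_eq_zero
    (by rw [smul_mulVec, lapMat_mulVec_one, smul_zero])
  rw [partialTransposeFst_smul, smul_mulVec, partialTransposeFst_lapMat_mulVec_one,
    smul_eq_zero, or_iff_right (inv_ne_zero htrace)] at hzero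
  exact_mod_cast (sub_eq_zero.mp (congrFun hzero x)).symm
end

section
/- Let n = p_1 p_2 > 4 with 2 ≤ p_1 ≤ p_2, and let 0 < r ≤ n/2. Then there exists a vertex labeling of K_{r,n-r} by {1,…,p_1}×{1,…,p_2} under which some vertex has different degrees in K_{r,n-r} and in the partial transpose graph (hence the normalized Laplacian is entangled in C^{p_1} × C^{p_2} for that labeling). -/
open Matrix Finset
open scoped Kronecker Classical ComplexOrder

/-- The complete bipartite graph K_{r,n-r} on Fin n, with parts {i : i < r} and
{i : r ≤ i}. -/
def Kbip (n r : ℕ) : SimpleGraph (Fin n) :=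
  SimpleGraph.fromRel fun i j => i.val < r ∧ ¬ j.val < r

/-!
Take the part of size `r` to be a set `T` of labels avoiding the column of the vertex
`x = (a₀, b₀)`. Then `x ∉ T` has degree `r` in `K_{r,n-r}`, while in the partial transpose its
neighbours are the `(a, b)` with `(a₀, b) ∈ T`, so its degree is `p₁` times the size of the row of
`x` inside `T`. Since that row holds at most half of the labels off the column, `T` can be chosen
disjoint from the row or containing all of it, making this degree `0` or `p₁ (p₂ - 1)`. Neither is
`r`, because `0 < r ≤ p₁ p₂ / 2 < p₁ (p₂ - 1)` once `p₂ ≥ 3`.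
-/

def completeBipartiteOn {γ : Type*} (s : Set γ) : SimpleGraph γ :=
  SimpleGraph.fromRel fun a b => a ∈ s ∧ b ∉ s

section completeBipartiteOn

variable {γ δ : Type*}

theorem completeBipartiteOn_adj (s : Set γ) (a b : γ) :
    (completeBipartiteOn s).Adj a b ↔ (a ∈ s ↔ b ∉ s) := by
  simp only [completeBipartiteOn, SimpleGraph.fromRel_adj]
  constructor
  · tauto
  · intro h
    exact ⟨by rintro rfl; tauto, by tauto⟩

theorem Kbip_eq_completeBipartiteOn (n r : ℕ) : Kbip n r = completeBipartiteOn {i | i.val < r} :=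
  rfl

theorem completeBipartiteOn_map_equiv (e : γ ≃ δ) (s : Set γ) :
    (completeBipartiteOn s).map e.toEmbedding = completeBipartiteOn (e '' s) := by
  ext a b
  rw [← e.symm_symm, SimpleGraph.map_symm, SimpleGraph.comap_adj, completeBipartiteOn_adj,
    completeBipartiteOn_adj]
  simp [Equiv.image_eq_preimage_symm]

theorem natDeg_completeBipartiteOn_of_notMem [Fintype γ] (T : Finset γ) {x : γ} (hx : x ∉ T) :
    natDeg (completeBipartiteOn (T : Set γ)) x = #T := by
  unfold natDeg
  congr 1
  ext y
  simp [completeBipartiteOn_adj, hx]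

theorem natDeg_partialTranspose_completeBipartiteOn [Fintype γ] [Fintype δ]
    (T : Finset (γ × δ)) {x : γ × δ} (hcol : ∀ a, (a, x.2) ∉ T) :
    natDeg (partialTranspose (completeBipartiteOn (T : Set (γ × δ)))) x =
      Fintype.card γ * #{b | (x.1, b) ∈ T} := by
  unfold natDeg
  rw [← card_univ, ← card_product]
  congr 1
  ext y
  simp [partialTranspose, completeBipartiteOn_adj, hcol]

theorem exists_equiv_map_Kbip_eq_completeBipartiteOn [Fintype γ] {n r : ℕ}
    (hn : Fintype.card γ = n) (T : Finset γ) (hT : #T = r) :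
    ∃ f : Fin n ≃ γ, (Kbip n r).map f.toEmbedding = completeBipartiteOn (T : Set γ) := by
  let e : Fin n ≃ γ := (Fintype.equivFinOfCardEq hn).symm
  have hS : #(({i | i.val < r} : Finset (Fin n)).map e.toEmbedding) = #T := by
    rw [card_map, Fin.card_filter_val_lt, hT, ← hn, ← hT]
    exact min_eq_right (card_le_univ T)
  obtain ⟨σ, hσ⟩ := Equiv.Perm.exists_map_finset_eq _ _ hS
  refine ⟨e.trans σ, ?_⟩
  rw [Kbip_eq_completeBipartiteOn, completeBipartiteOn_map_equiv, ← hσ]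
  simp only [coe_map, coe_filter_univ, Set.image_image]
  rfl

end completeBipartiteOn

theorem Finset.exists_subset_card_eq_and_disjoint_or_superset {γ : Type*} {U W : Finset γ}
    {r : ℕ} (hWU : W ⊆ U) (hW : 2 * #W ≤ #U) (hr : r ≤ #U) :
    ∃ T ⊆ U, #T = r ∧ (Disjoint T W ∨ W ⊆ T) := by
  by_cases hsmall : r ≤ #(U \ W)
  · obtain ⟨T, hT, hTcard⟩ := exists_subset_card_eq hsmall
    exact ⟨T, hT.trans sdiff_subset, hTcard, .inl (disjoint_of_subset_left hT sdiff_disjoint)⟩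
  · rw [card_sdiff_of_subset hWU] at hsmall
    obtain ⟨T, hWT, hTU, hTcard⟩ := exists_subsuperset_card_eq hWU (by omega) hr
    exact ⟨T, hTU, hTcard, .inr hWT⟩

theorem exists_card_eq_avoiding_column_with_full_or_empty_row {α β : Type*} [Fintype α]
    [Fintype β] (a₀ : α) (b₀ : β) {r : ℕ} (hα : 2 ≤ Fintype.card α)
    (hr : r ≤ Fintype.card α * (Fintype.card β - 1)) :
    ∃ T : Finset (α × β), #T = r ∧ (∀ a, (a, b₀) ∉ T) ∧
      (({b | (a₀, b) ∈ T} : Finset β) = ∅ ∨ ({b | (a₀, b) ∈ T} : Finset β) = {b₀}ᶜ) := by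
  have hU : #((univ : Finset α) ×ˢ {b₀}ᶜ) = Fintype.card α * (Fintype.card β - 1) := by
    simp [card_compl]
  have hW : #({a₀} ×ˢ {b₀}ᶜ) = Fintype.card β - 1 := by simp [card_compl]
  obtain ⟨T, hTU, hTcard, hT⟩ := exists_subset_card_eq_and_disjoint_or_superset
    (product_subset_product_left (subset_univ {a₀}))
    (hU ▸ hW ▸ Nat.mul_le_mul_right _ hα) (hU ▸ hr)
  have hcol : ∀ a, (a, b₀) ∉ T := fun a h => by simpa using hTU h
  refine ⟨T, hTcard, hcol, hT.imp (fun hdisj => ?_) (fun hsub => ?_)⟩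
  · refine filter_eq_empty_iff.mpr fun b _ hb => ?_
    have hb₀ : b ≠ b₀ := fun h => hcol a₀ (h ▸ hb)
    exact disjoint_left.mp hdisj hb (by simp [hb₀])
  · ext b
    simp only [mem_filter, mem_univ, true_and, mem_compl, mem_singleton]
    exact ⟨fun hb h => hcol a₀ (h ▸ hb), fun hb => hsub (by simp [hb])⟩

/-- for n = p₁p₂ > 4 with 2 ≤ p₁ ≤ p₂ and 0 < r ≤ n/2, there exists a
vertex labeling of K_{r,n-r} by {1,…,p₁} × {1,…,p₂} under which some vertex has
different degrees in K_{r,n-r} and in its partial transpose graph (hence the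
normalized Laplacian is entangled in ℂ^{p₁} × ℂ^{p₂} for that labeling). -/
theorem stmt_15 (p₁ p₂ r : ℕ) (hp₁ : 2 ≤ p₁) (hp₁₂ : p₁ ≤ p₂) (hn : 4 < p₁ * p₂)
    (hr₀ : 0 < r) (hr : 2 * r ≤ p₁ * p₂) :
    ∃ f : Fin (p₁ * p₂) ≃ Fin p₁ × Fin p₂,
      ∃ x, natDeg (partialTranspose ((Kbip (p₁ * p₂) r).map f.toEmbedding)) x ≠
        natDeg ((Kbip (p₁ * p₂) r).map f.toEmbedding) x := by
  have hp₂ : 3 ≤ p₂ := by nlinarith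
  have h3p₁ : 3 * p₁ ≤ p₁ * p₂ := by nlinarith
  let x : Fin p₁ × Fin p₂ := (⟨0, by omega⟩, ⟨0, by omega⟩)
  obtain ⟨T, hTcard, hcol, hrow⟩ := exists_card_eq_avoiding_column_with_full_or_empty_row
    x.1 x.2 (r := r) (by simpa) (by simp only [Fintype.card_fin, Nat.mul_sub_one]; omega)
  obtain ⟨f, hf⟩ :=
    exists_equiv_map_Kbip_eq_completeBipartiteOn (n := p₁ * p₂) (by simp) T hTcard
  refine ⟨f, x, ?_⟩
  rw [hf, natDeg_partialTranspose_completeBipartiteOn T hcol,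
    natDeg_completeBipartiteOn_of_notMem T (hcol x.1), hTcard]
  rcases hrow with hrow | hrow <;> simp [hrow, card_compl, Nat.mul_sub_one] <;> omega
end
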